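/- Let Q_n(x) be the descent polynomial over permutations of the multiset {1,1,...,n,n,n+1}, P_n(x) the descent polynomial over permutations of {1,1,...,n,n}, and R_n(x) = (1+(2n-1)x) P_n(x) + x(1-x) P_n'(x). Then Q_n(x) = R_n(x) + x P_n(x), and moreover x·P_n(x) = Σ x^{des(σ)} over those permutations σ of {1,1,...,n,n,n+1} with σ_1 = n+1, while R_n(x) = Σ x^{des(σ)} over those with σ_1 < n+1. -/

import Mathlib

open Polynomial

/-- Number of descents of a word. -/
def des (l : List ℤ) : ℕ := ((l.zip l.tail).filter (fun p => p.2 < p.1)).length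

/-- Type-B descents: prepend 0. -/
def desB (l : List ℤ) : ℕ := des (0 :: l)

/-- The multiset {1,1,2,2,...,n,n} as a list. -/
def baseList (n : ℕ) : List ℤ := (List.range n).flatMap (fun i => [(i : ℤ) + 1, (i : ℤ) + 1])

/-- All distinct arrangements (multiset permutations) of a list. -/
def arrangements (l : List ℤ) : List (List ℤ) := l.permutations.dedup

/-- Descent polynomial over arrangements of `l`. -/
noncomputable def desPoly (l : List ℤ) : Polynomial ℝ :=
  ((arrangements l).map (fun w => (X : Polynomial ℝ) ^ des w)).sum

noncomputable def Ppoly (n : ℕ) : Polynomial ℝ := desPoly (baseList n)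

noncomputable def Qpoly (n : ℕ) : Polynomial ℝ := desPoly (baseList n ++ [(n : ℤ) + 1])

/-- All signings of a word. -/
def signings : List ℤ → List (List ℤ)
  | [] => [[]]
  | a :: t => (signings t).flatMap (fun w => [a :: w, (-a) :: w])

/-- All signed permutations of the multiset given by `l`. -/
def signedWords (l : List ℤ) : List (List ℤ) := (arrangements l).flatMap signings

noncomputable def SpolyB (n : ℕ) : Polynomial ℝ :=
  ((signedWords (baseList n)).map (fun w => (X : Polynomial ℝ) ^ desB w)).sum

/-- Signed permutations of {1,1,...,n,n,n+1} in which n+1 carries a plus sign. -/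
def Dwords (n : ℕ) : List (List ℤ) :=
  (signedWords (baseList n ++ [(n : ℤ) + 1])).filter (fun w => ((n : ℤ) + 1) ∈ w)

noncomputable def TpolyB (n : ℕ) : Polynomial ℝ :=
  ((Dwords n).map (fun w => (X : Polynomial ℝ) ^ desB w)).sum

def PcountZ (n : ℕ) (k : ℤ) : ℕ :=
  ((arrangements (baseList n)).filter (fun w => (des w : ℤ) = k)).length

def QcountN (n : ℕ) (k : ℕ) : ℕ :=
  ((arrangements (baseList n ++ [(n : ℤ) + 1])).filter (fun w => des w = k)).length

def ScountZ (n : ℕ) (k : ℤ) : ℕ :=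
  ((signedWords (baseList n)).filter (fun w => (desB w : ℤ) = k)).length

def TcountZ (n : ℕ) (k : ℤ) : ℕ :=
  ((Dwords n).filter (fun w => (desB w : ℤ) = k)).length

/-!
Every arrangement of `{1,1,…,n,n,n+1}` arises exactly once by inserting the largest letter
`n+1` into an arrangement `w` of `{1,1,…,n,n}` at one of its `2n+1` positions. Inserting it at
the front or into an ascent creates one new descent, inserting it at the end or into a descent
creates none; so if `w` has `d` descents its insertions contribute `(d+1)x^d + (2n-d)x^(d+1)`,
and summing over `w` gives `Qₙ = (1 + 2nx)Pₙ + x(1-x)Pₙ'`. The insertions at the front are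
exactly the arrangements starting with `n+1` and contribute `x Pₙ`; the others give `Rₙ`.
-/

open Finset

lemma des_cons_cons (a b : ℤ) (t : List ℤ) :
    des (a :: b :: t) = des (b :: t) + if b < a then 1 else 0 := by
  simp only [des, List.tail_cons, List.zip_cons_cons, List.filter_cons]
  split <;> simp_all

lemma des_cons_of_forall_lt {m : ℤ} {w : List ℤ} (hw : w ≠ []) (h : ∀ a ∈ w, a < m) :
    des (m :: w) = des w + 1 := by
  obtain ⟨b, t, rfl⟩ := List.exists_cons_of_ne_nil hw
  simp [des_cons_cons, h b (by simp)]

section Insertion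

variable {R : Type*} [CommRing R] (x : R) {m : ℤ}

theorem sum_range_pow_des_insertIdx :
    ∀ w : List ℤ, (∀ a ∈ w, a < m) →
      ∑ i ∈ range (w.length + 1), x ^ des (w.insertIdx i m) =
        (des w + 1 : R) * x ^ des w + ((w.length : R) - des w) * x ^ (des w + 1)
  | [], _ => by simp [des]
  | [a], h => by
      have ha : a < m := h a (by simp)
      simp [sum_range_succ, List.insertIdx_succ_cons, ha, ha.not_gt, des]
      ring
  | a :: b :: t, h => by
      -- positions 0 and 1 put `m` before `a` resp. between `a` and `b`; from position 2 on,
      -- the pair `a, b` is untouched and the sum is the one for `b :: t`, shifted by one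
      have ha : a < m := h a (by simp)
      have hbt : ∀ c ∈ b :: t, c < m := fun c hc => h c (List.mem_cons_of_mem a hc)
      have h0 : des (m :: a :: b :: t) = des (a :: b :: t) + 1 :=
        des_cons_of_forall_lt (List.cons_ne_nil _ _) h
      have h1 : des ((a :: b :: t).insertIdx 1 m) = des (b :: t) + 1 := by
        simp [List.insertIdx_succ_cons, des_cons_cons a m,
          des_cons_of_forall_lt (List.cons_ne_nil b t) hbt, ha.not_gt]
      have hsucc : ∀ i, des ((a :: b :: t).insertIdx (i + 1 + 1) m) =
          des ((b :: t).insertIdx (i + 1) m) + if b < a then 1 else 0 :=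
        fun i => des_cons_cons a b (t.insertIdx i m)
      have ih : ∑ i ∈ range (t.length + 1), x ^ des ((b :: t).insertIdx (i + 1) m) =
          (des (b :: t) + 1 : R) * x ^ des (b :: t)
            + ((t.length : R) - des (b :: t)) * x ^ (des (b :: t) + 1) := by
        have := sum_range_pow_des_insertIdx (b :: t) hbt
        rw [sum_range_succ', List.insertIdx_zero, des_cons_of_forall_lt (List.cons_ne_nil b t) hbt,
          List.length_cons] at this
        push_cast at this
        linear_combination this
      rw [List.length_cons, List.length_cons, sum_range_succ', sum_range_succ']
      simp only [hsucc, pow_add, ← sum_mul, ih, List.insertIdx_zero, h0, h1, des_cons_cons a b t]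
      split_ifs <;> push_cast <;> ring

end Insertion

section Arrangements

variable {α : Type*} [DecidableEq α]

lemma idxOf_insertIdx_of_not_mem {m : α} :
    ∀ {w : List α} {i : ℕ}, i ≤ w.length → m ∉ w → (w.insertIdx i m).idxOf m = i
  | _, 0, _, _ => by simp
  | a :: t, i + 1, hi, hm => by
      rw [List.mem_cons, not_or] at hm
      rw [List.insertIdx_succ_cons, List.idxOf_cons_ne _ (Ne.symm hm.1),
        idxOf_insertIdx_of_not_mem (by simpa using hi) hm.2]

lemma insertIdx_idxOf_erase {m : α} :
    ∀ {v : List α}, m ∈ v → (v.erase m).insertIdx (v.idxOf m) m = v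
  | a :: t, hm => by
      by_cases h : a = m
      · simp [h]
      · rw [List.erase_cons_tail (by simpa using h), List.idxOf_cons_ne _ h,
          List.insertIdx_succ_cons, insertIdx_idxOf_erase (by simpa [Ne.symm h] using hm)]

end Arrangements

lemma mem_arrangements {v l : List ℤ} : v ∈ arrangements l ↔ v.Perm l := by
  simp [arrangements]

lemma nodup_arrangements (l : List ℤ) : (arrangements l).Nodup := List.nodup_dedup _

theorem sum_map_arrangements_append_singleton {M : Type*} [AddCommMonoid M] (f : List ℤ → M)
    {l : List ℤ} {m : ℤ} (hm : m ∉ l) :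
    ((arrangements (l ++ [m])).map f).sum =
      ((arrangements l).map fun w => ∑ i ∈ range (l.length + 1), f (w.insertIdx i m)).sum := by
  rw [← List.sum_toFinset _ (nodup_arrangements _),
    ← List.sum_toFinset _ (nodup_arrangements _), ← sum_product']
  have hperm : (l ++ [m]).Perm (m :: l) := List.perm_append_singleton m l
  have mem_left : ∀ v ∈ (arrangements (l ++ [m])).toFinset, v.Perm (m :: l) := fun v hv =>
    (mem_arrangements.1 (List.mem_toFinset.1 hv)).trans hperm
  have mem_right : ∀ p ∈ (arrangements l).toFinset ×ˢ range (l.length + 1),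
      p.1.Perm l ∧ p.2 ≤ p.1.length := fun p hp => by
    simp only [List.mem_toFinset, mem_arrangements, mem_product, mem_range] at hp
    exact ⟨hp.1, by rw [hp.1.length_eq]; omega⟩
  have not_mem : ∀ w : List ℤ, w.Perm l → m ∉ w := fun w hw hmw => hm (hw.subset hmw)
  refine sum_nbij' (fun v => (v.erase m, v.idxOf m)) (fun p => p.1.insertIdx p.2 m) ?_ ?_ ?_ ?_ ?_
  · intro v hv
    have hv := mem_left v hv
    simp only [List.mem_toFinset, mem_arrangements, mem_product, mem_range]
    refine ⟨by simpa using hv.erase m, ?_⟩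
    have := List.idxOf_lt_length_iff.2 (hv.symm.subset List.mem_cons_self)
    simpa only [hv.length_eq, List.length_cons] using this
  · rintro ⟨w, i⟩ hp
    obtain ⟨hw, hi⟩ := mem_right _ hp
    rw [List.mem_toFinset, mem_arrangements]
    exact (List.perm_insertIdx m w hi).trans ((hw.cons m).trans hperm.symm)
  · intro v hv
    exact insertIdx_idxOf_erase ((mem_left v hv).symm.subset List.mem_cons_self)
  · rintro ⟨w, i⟩ hp
    obtain ⟨hw, hi⟩ := mem_right _ hp
    have hidx := idxOf_insertIdx_of_not_mem hi (not_mem w hw)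
    refine Prod.ext (List.insertIdx_injective i m ?_) hidx
    simpa only [hidx] using insertIdx_idxOf_erase ((List.mem_insertIdx (b := m) hi).2 (Or.inl rfl))
  · intro v hv
    rw [insertIdx_idxOf_erase ((mem_left v hv).symm.subset List.mem_cons_self)]

lemma X_mul_derivative_X_pow {R : Type*} [CommSemiring R] (d : ℕ) :
    X * derivative (X ^ d : R[X]) = (d : R[X]) * X ^ d := by
  cases d with
  | zero => simp
  | succ k => rw [derivative_X_pow, C_eq_natCast, Nat.add_sub_cancel, pow_succ]; ring

theorem desPoly_append_singleton {l : List ℤ} {m : ℤ} (h : ∀ a ∈ l, a < m) :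
    desPoly (l ++ [m]) = (1 + ((l.length : ℝ[X]) - 1) * X) * desPoly l
      + X * (1 - X) * derivative (desPoly l) + X * desPoly l := by
  rw [desPoly, sum_map_arrangements_append_singleton _ fun hm => (h m hm).false, desPoly,
    map_list_sum, List.map_map, ← List.sum_map_mul_left, ← List.sum_map_mul_left,
    ← List.sum_map_mul_left, ← List.sum_map_add, ← List.sum_map_add]
  refine congrArg List.sum (List.map_congr_left fun w hw => ?_)
  have hw := mem_arrangements.1 hw
  rw [← hw.length_eq, sum_range_pow_des_insertIdx _ w fun a ha => h a (hw.subset ha)]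
  simp only [Function.comp_apply]
  linear_combination (X - 1) * X_mul_derivative_X_pow (R := ℝ) (des w)

theorem sum_pow_des_filter_headI_eq {l : List ℤ} {m : ℤ} (hl : l ≠ [])
    (h : ∀ a ∈ l, a < m) :
    (((arrangements (l ++ [m])).filter fun w => w.headI = m).map
        fun w => (X : ℝ[X]) ^ des w).sum = X * desPoly l := by
  have hperm : ((arrangements (l ++ [m])).filter fun w => w.headI = m).Perm
      ((arrangements l).map (m :: ·)) := by
    refine (List.perm_ext_iff_of_nodup ((nodup_arrangements _).filter _)
      ((nodup_arrangements l).map List.cons_injective)).2 fun v => ?_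
    simp only [List.mem_filter, mem_arrangements, List.mem_map, decide_eq_true_eq]
    constructor
    · rintro ⟨hv, hhead⟩
      cases v with
      | nil => simp at hv
      | cons c t =>
        rw [List.headI_cons] at hhead
        subst hhead
        exact ⟨t, (hv.trans (List.perm_append_singleton _ l)).cons_inv, rfl⟩
    · rintro ⟨w, hw, rfl⟩
      exact ⟨(hw.cons m).trans (List.perm_append_singleton m l).symm, rfl⟩
  rw [hperm.map _ |>.sum_eq, List.map_map, desPoly, ← List.sum_map_mul_left]
  refine congrArg List.sum (List.map_congr_left fun w hw => ?_)
  have hw := mem_arrangements.1 hw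
  have hw0 : w ≠ [] := by
    rintro rfl
    exact hl hw.nil_eq.symm
  rw [Function.comp_apply, des_cons_of_forall_lt hw0 fun a ha => h a (hw.subset ha), pow_succ']

theorem desPoly_append_singleton_eq_add_filter_headI {l : List ℤ} {m : ℤ}
    (h : ∀ a ∈ l, a < m) :
    desPoly (l ++ [m]) =
      (((arrangements (l ++ [m])).filter fun w => w.headI = m).map
          fun w => (X : ℝ[X]) ^ des w).sum
      + (((arrangements (l ++ [m])).filter fun w => w.headI < m).map
          fun w => (X : ℝ[X]) ^ des w).sum := by
  rw [desPoly, ← List.sum_map_filter_add_sum_map_filter_not (fun w => w.headI = m)]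
  congr 3
  refine List.filter_congr fun v hv => ?_
  have hv := mem_arrangements.1 hv
  cases v with
  | nil => simp at hv
  | cons c t =>
    rcases List.mem_append.1 (hv.subset List.mem_cons_self) with hc | hc
    · simp [h c hc, (h c hc).ne]
    · simp [List.mem_singleton.1 hc]

lemma length_baseList (n : ℕ) : (baseList n).length = 2 * n := by
  simp [baseList, mul_comm]

lemma lt_of_mem_baseList {n : ℕ} {a : ℤ} (ha : a ∈ baseList n) : a < (n : ℤ) + 1 := by
  obtain ⟨i, hi, rfl⟩ : ∃ i < n, a = i + 1 := by simpa [baseList] using ha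
  omega

/-- Qₙ(x) = Rₙ(x) + x Pₙ(x), where Rₙ(x) = (1+(2n-1)x)Pₙ(x) + x(1-x)Pₙ'(x);
moreover x·Pₙ(x) is the descent polynomial over arrangements of {1,1,…,n,n,n+1}
whose first letter is n+1, and Rₙ(x) over those whose first letter is < n+1. -/
theorem stmt15 (n : ℕ) (hn : 1 ≤ n) :
    Qpoly n = ((1 + (2 * (n : Polynomial ℝ) - 1) * X) * Ppoly n
        + X * (1 - X) * derivative (Ppoly n)) + X * Ppoly n ∧
    X * Ppoly n =
      (((arrangements (baseList n ++ [(n : ℤ) + 1])).filter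
          (fun w => w.headI = (n : ℤ) + 1)).map
        (fun w => (X : Polynomial ℝ) ^ des w)).sum ∧
    (1 + (2 * (n : Polynomial ℝ) - 1) * X) * Ppoly n
        + X * (1 - X) * derivative (Ppoly n) =
      (((arrangements (baseList n ++ [(n : ℤ) + 1])).filter
          (fun w => w.headI < (n : ℤ) + 1)).map
        (fun w => (X : Polynomial ℝ) ^ des w)).sum := by
  have hlt : ∀ a ∈ baseList n, a < (n : ℤ) + 1 := fun a => lt_of_mem_baseList
  have hne : baseList n ≠ [] := by
    rw [← List.length_pos_iff, length_baseList]
    omega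
  have hQ : Qpoly n = ((1 + (2 * (n : ℝ[X]) - 1) * X) * Ppoly n
      + X * (1 - X) * derivative (Ppoly n)) + X * Ppoly n := by
    rw [Qpoly, Ppoly, desPoly_append_singleton hlt, length_baseList]
    push_cast
    ring
  have hhead : _ = X * Ppoly n := sum_pow_des_filter_headI_eq hne hlt
  have hsplit : Qpoly n = _ := desPoly_append_singleton_eq_add_filter_headI hlt
  exact ⟨hQ, hhead.symm, by linear_combination hsplit - hQ + hhead⟩
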